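/- Let P be an orthogonal projection matrix and M symmetric positive definite with (I−P)MP = 0 (the null space N = range(P) is invariant under M). Then, with M_c = M + PM − (PM)ᵀ and α = M M_c⁻¹, the cross-coupling term μP = (I−P)αP vanishes. -/
import Mathlib


open Matrix

/-- For a decoupled constrained mechanical system (`(I−P)MP = 0`), the
cross-coupling term `μP = (I−P) M M_c⁻¹ P` vanishes, where
`M_c = M + PM − (PM)ᵀ`. -/
theorem decoupling_cross_term_vanishes
    (n : ℕ) (P M : Matrix (Fin n) (Fin n) ℝ)
    (hPidem : P * P = P) (hPsymm : Pᵀ = P)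
    (hM : M.PosDef) (hMsymm : Mᵀ = M)
    (hdec : (1 - P) * M * P = 0)
    (hMc : IsUnit (M + P * M - (P * M)ᵀ)) :
    (1 - P) * (M * (M + P * M - (P * M)ᵀ)⁻¹) * P = 0 := by
  have h1 : M * P = P * (M * P) := by
    have h := hdec
    rw [sub_mul, sub_mul, one_mul, sub_eq_zero] at h
    exact h.trans (mul_assoc P M P)
  have h2' : P * M = P * (M * P) := by
    have := congrArg Matrix.transpose h1
    simpa [Matrix.transpose_mul, hPsymm, hMsymm, mul_assoc] using this
  have h2 : P * M = M * P := h2'.trans h1.symm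
  have hMceq : M + P * M - (P * M)ᵀ = M := by
    rw [Matrix.transpose_mul, hPsymm, hMsymm, h2, add_sub_cancel_right]
  rw [hMceq, Matrix.mul_nonsing_inv M (isUnit_iff_ne_zero.mpr hM.det_pos.ne'),
    mul_one, sub_mul, one_mul, hPidem, sub_self]
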